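/- arXiv:2509.18104 — 5 statements merged into one kernel-verified Lean document; each statement's English description precedes it below -/
import Mathlib

section
/- Let (X, d) be a metric space equipped with its Borel σ-algebra, let μ_1, …, μ_m and μ_v be Borel probability measures on X, and let α_1, …, α_m ≥ 0 satisfy Σ_{i=1}^m α_i = 1. Let f_v, f_t^1, …, f_t^m, h, h* : X → ℝ be Borel measurable, let k ≥ 0, and let L : ℝ × ℝ → ℝ be symmetric (L(u, w) = L(w, u)) and k-Lipschitz in its first argument. Assume the map x ↦ L(h(x), h*(x)) is 1-Lipschitz on (X, d), and assume all integrals appearing below are finite. Then for every coupling π of the mixture measure Σ_{i=1}^m α_i μ_i and μ_v: |∫_X L(f_v(x), h(x)) dμ_v(x) − Σ_{i=1}^m α_i ∫_X L(f_t^i(x), h(x)) dμ_i(x)| ≤ ∫_{X×X} d(x, y) dπ(x, y) + k·(∫_X |f_v(x) − h*(x)| dμ_v(x) + Σ_{i=1}^m α_i ∫_X |f_t^i(x) − h*(x)| dμ_i(x)). (Taking the infimum over couplings yields the paper's Theorem 1: the federated validation–training gap is bounded by the 1-Wasserstein distance between the mixture of training distributions and the validation distribution, plus the labeling-discrepancy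 terms.) -/
/-!
With `g x := L (h x, h⋆ x)`, symmetry and the Lipschitz property of `L` give
`|L (f x, h x) - g x| ≤ k |f x - h⋆ x|` pointwise, so replacing the loss by `g` under `μ_v` and
under each `μ_i` costs exactly the labeling-discrepancy terms. What remains is
`∫ g dμ_v - ∫ g d(Σ α_i μ_i)`, the gap of a `1`-Lipschitz function between the two marginals of
`π`, which is at most `∫ d dπ` (the easy half of Kantorovich–Rubinstein duality).
-/

open MeasureTheory

open scoped NNReal

section

variable {X E : Type*} [MeasurableSpace X] [NormedAddCommGroup E] [NormedSpace ℝ E]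

theorem norm_integral_sub_integral_le_of_norm_sub_le {μ : Measure X} {f g : X → E} {c : X → ℝ}
    (hf : Integrable f μ) (hg : Integrable g μ) (hc : Integrable c μ)
    (hfg : ∀ᵐ x ∂μ, ‖f x - g x‖ ≤ c x) :
    ‖∫ x, f x ∂μ - ∫ x, g x ∂μ‖ ≤ ∫ x, c x ∂μ := by
  rw [← integral_sub hf hg]
  exact norm_integral_le_of_norm_le hc hfg

theorem integral_finsetSum_ofReal_smul_measure {ι : Type*} {s : Finset ι} {μ : ι → Measure X}
    {α : ι → ℝ} (hα : ∀ i ∈ s, 0 ≤ α i) {f : X → E} (hf : ∀ i ∈ s, Integrable f (μ i)) :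
    ∫ x, f x ∂(∑ i ∈ s, ENNReal.ofReal (α i) • μ i) = ∑ i ∈ s, α i • ∫ x, f x ∂μ i := by
  rw [integral_finsetSum_measure fun i hi => (hf i hi).smul_measure ENNReal.ofReal_ne_top]
  refine Finset.sum_congr rfl fun i hi => ?_
  rw [integral_smul_measure, ENNReal.toReal_ofReal (hα i hi)]

end

theorem LipschitzWith.abs_integral_sub_integral_le_of_map_fst_of_map_snd {X : Type*}
    [PseudoMetricSpace X] [MeasurableSpace X] [OpensMeasurableSpace X] {g : X → ℝ} {K : ℝ≥0}
    (hg : LipschitzWith K g) {μ ν : Measure X} {π : Measure (X × X)}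
    (hπμ : π.map Prod.fst = μ) (hπν : π.map Prod.snd = ν)
    (hμ : Integrable g μ) (hν : Integrable g ν)
    (hπ : Integrable (fun p : X × X => dist p.1 p.2) π) :
    |∫ x, g x ∂ν - ∫ x, g x ∂μ| ≤ K * ∫ p : X × X, dist p.1 p.2 ∂π := by
  subst hπμ hπν
  have hgm := hg.continuous.aestronglyMeasurable (μ := Measure.map Prod.fst π)
  have hgm' := hg.continuous.aestronglyMeasurable (μ := Measure.map Prod.snd π)
  rw [integral_map measurable_fst.aemeasurable hgm, integral_map measurable_snd.aemeasurable hgm',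
    ← integral_const_mul]
  refine norm_integral_sub_integral_le_of_norm_sub_le
    ((integrable_map_measure hgm' measurable_snd.aemeasurable).mp hν)
    ((integrable_map_measure hgm measurable_fst.aemeasurable).mp hμ) (hπ.const_mul _)
    (.of_forall fun p => ?_)
  simpa [Real.dist_eq, dist_comm p.1] using hg.dist_le_mul p.2 p.1

theorem Finset.abs_sum_mul_sub_sum_mul_le {ι : Type*} (s : Finset ι) {α a b c : ι → ℝ}
    (hα : ∀ i ∈ s, 0 ≤ α i) (habc : ∀ i ∈ s, |a i - b i| ≤ c i) :
    |∑ i ∈ s, α i * a i - ∑ i ∈ s, α i * b i| ≤ ∑ i ∈ s, α i * c i := by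
  rw [← Finset.sum_sub_distrib]
  refine (Finset.abs_sum_le_sum_abs _ _).trans (Finset.sum_le_sum fun i hi => ?_)
  rw [← mul_sub, abs_mul, abs_of_nonneg (hα i hi)]
  exact mul_le_mul_of_nonneg_left (habc i hi) (hα i hi)

theorem federated_generalization_bound_general
    {X : Type*} [MetricSpace X] [MeasurableSpace X] [BorelSpace X] {m : ℕ}
    (μ : Fin m → Measure X) (μv : Measure X)
    (α : Fin m → ℝ) (hα : ∀ i, 0 ≤ α i)
    (fv : X → ℝ) (ft : Fin m → X → ℝ) (h hstar : X → ℝ)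
    (k : ℝ) (L : ℝ → ℝ → ℝ)
    (hLsymm : ∀ a b : ℝ, L a b = L b a)
    (hLlip : ∀ a a' b : ℝ, |L a b - L a' b| ≤ k * |a - a'|)
    (hLip1 : ∀ x y : X, |L (h x) (hstar x) - L (h y) (hstar y)| ≤ dist x y)
    (hint_v : Integrable (fun x => L (fv x) (h x)) μv)
    (hint_t : ∀ i, Integrable (fun x => L (ft i x) (h x)) (μ i))
    (hint_dv : Integrable (fun x => |fv x - hstar x|) μv)
    (hint_dt : ∀ i, Integrable (fun x => |ft i x - hstar x|) (μ i))
    (π : Measure (X × X))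
    (hπ1 : π.map Prod.fst = ∑ i, ENNReal.ofReal (α i) • μ i)
    (hπ2 : π.map Prod.snd = μv)
    (hπint : Integrable (fun p : X × X => dist p.1 p.2) π) :
    |(∫ x, L (fv x) (h x) ∂μv) - ∑ i, α i * ∫ x, L (ft i x) (h x) ∂(μ i)|
      ≤ (∫ p : X × X, dist p.1 p.2 ∂π)
        + k * ((∫ x, |fv x - hstar x| ∂μv)
            + ∑ i, α i * ∫ x, |ft i x - hstar x| ∂(μ i)) := by
  set g : X → ℝ := fun x => L (h x) (hstar x)
  have hg : LipschitzWith 1 g :=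
    .of_dist_le_mul fun x y => by simpa [Real.dist_eq] using hLip1 x y
  have hloss (a b c : ℝ) : |L a b - L b c| ≤ k * |a - c| := hLsymm b c ▸ hLlip a c b
  have hcompare {ν : Measure X} {f : X → ℝ} (hf : Integrable (fun x => L (f x) (h x)) ν)
      (hfd : Integrable (fun x => |f x - hstar x|) ν) :
      Integrable g ν ∧ |∫ x, L (f x) (h x) ∂ν - ∫ x, g x ∂ν| ≤ k * ∫ x, |f x - hstar x| ∂ν := by
    have hgν := integrable_of_norm_sub_le hg.continuous.aestronglyMeasurable hf
      (hfd.const_mul k) (.of_forall fun _ => hloss _ _ _)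
    refine ⟨hgν, ?_⟩
    rw [← integral_const_mul]
    exact norm_integral_sub_integral_le_of_norm_sub_le hf hgν (hfd.const_mul k)
      (.of_forall fun _ => hloss _ _ _)
  obtain ⟨hgv, hval⟩ := hcompare hint_v hint_dv
  choose hgt htrain using fun i => hcompare (hint_t i) (hint_dt i)
  have hshift : |∫ x, g x ∂μv - ∑ i, α i * ∫ x, g x ∂(μ i)| ≤ ∫ p : X × X, dist p.1 p.2 ∂π := by
    have hmix := integral_finsetSum_ofReal_smul_measure (s := .univ) (fun i _ => hα i)
      (fun i _ => hgt i) (f := g)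
    simp only [smul_eq_mul] at hmix
    simpa [← hmix] using hg.abs_integral_sub_integral_le_of_map_fst_of_map_snd hπ1 hπ2
      (integrable_finsetSum_measure.2 fun i _ => (hgt i).smul_measure ENNReal.ofReal_ne_top)
      hgv hπint
  have htrain_sum : |∑ i, α i * ∫ x, g x ∂(μ i) - ∑ i, α i * ∫ x, L (ft i x) (h x) ∂(μ i)|
      ≤ k * ∑ i, α i * ∫ x, |ft i x - hstar x| ∂(μ i) := by
    rw [Finset.mul_sum]
    refine (Finset.abs_sum_mul_sub_sum_mul_le _ (fun i _ => hα i)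
      fun i _ => (abs_sub_comm _ _).trans_le (htrain i)).trans_eq ?_
    exact Finset.sum_congr rfl fun i _ => mul_left_comm _ _ _
  linarith [abs_sub_le (∫ x, L (fv x) (h x) ∂μv) (∫ x, g x ∂μv)
      (∑ i, α i * ∫ x, L (ft i x) (h x) ∂(μ i)),
    abs_sub_le (∫ x, g x ∂μv) (∑ i, α i * ∫ x, g x ∂(μ i))
      (∑ i, α i * ∫ x, L (ft i x) (h x) ∂(μ i))]

/-- Theorem 1 of the paper, coupling form: Let `(X, d)` be a metric space with
Borel σ-algebra, `μ_1, …, μ_m, μ_v` Borel probability measures, `α_i ≥ 0` with `Σ α_i = 1`.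
Let `f_v, f_t^i, h, h⋆ : X → ℝ` be Borel measurable, `k ≥ 0`, `L : ℝ × ℝ → ℝ` symmetric and
`k`-Lipschitz in its first argument, and assume `x ↦ L(h(x), h⋆(x))` is `1`-Lipschitz on `(X, d)`.
Assuming all integrals appearing below are finite, for every coupling `π` of `Σ_i α_i μ_i`
and `μ_v`:
`|∫ L(f_v, h) dμ_v − Σ_i α_i ∫ L(f_t^i, h) dμ_i|
  ≤ ∫ d(x,y) dπ + k·(∫ |f_v − h⋆| dμ_v + Σ_i α_i ∫ |f_t^i − h⋆| dμ_i)`. -/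
theorem federated_generalization_bound
    {X : Type*} [MetricSpace X] [MeasurableSpace X] [BorelSpace X] {m : ℕ}
    (μ : Fin m → Measure X) (μv : Measure X)
    [∀ i, IsProbabilityMeasure (μ i)] [IsProbabilityMeasure μv]
    (α : Fin m → ℝ) (hα : ∀ i, 0 ≤ α i) (hαsum : ∑ i, α i = 1)
    (fv : X → ℝ) (ft : Fin m → X → ℝ) (h hstar : X → ℝ)
    (hfv : Measurable fv) (hft : ∀ i, Measurable (ft i))
    (hh : Measurable h) (hhstar : Measurable hstar)
    (k : ℝ) (hk : 0 ≤ k) (L : ℝ → ℝ → ℝ)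
    (hLsymm : ∀ a b : ℝ, L a b = L b a)
    (hLlip : ∀ a a' b : ℝ, |L a b - L a' b| ≤ k * |a - a'|)
    (hLip1 : ∀ x y : X, |L (h x) (hstar x) - L (h y) (hstar y)| ≤ dist x y)
    (hint_v : Integrable (fun x => L (fv x) (h x)) μv)
    (hint_t : ∀ i, Integrable (fun x => L (ft i x) (h x)) (μ i))
    (hint_dv : Integrable (fun x => |fv x - hstar x|) μv)
    (hint_dt : ∀ i, Integrable (fun x => |ft i x - hstar x|) (μ i))
    (π : Measure (X × X)) [IsProbabilityMeasure π]
    (hπ1 : π.map Prod.fst = ∑ i, ENNReal.ofReal (α i) • μ i)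
    (hπ2 : π.map Prod.snd = μv)
    (hπint : Integrable (fun p : X × X => dist p.1 p.2) π) :
    |(∫ x, L (fv x) (h x) ∂μv) - ∑ i, α i * ∫ x, L (ft i x) (h x) ∂(μ i)|
      ≤ (∫ p : X × X, dist p.1 p.2 ∂π)
        + k * ((∫ x, |fv x - hstar x| ∂μv)
            + ∑ i, α i * ∫ x, |ft i x - hstar x| ∂(μ i)) :=
  federated_generalization_bound_general μ μv α hα fv ft h hstar k L hLsymm hLlip hLip1 hint_v
    hint_t hint_dv hint_dt π hπ1 hπ2 hπint
end

section
/- For all nonnegative real numbers x, y, z, w with 2x² + 2w² + y² + z² > 0: x + w − √(x² + y² + z² + w²) ≥ −(y² + z²) / √(2x² + 2w² + y² + z²). -/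
/-- For all nonnegative reals `x, y, z, w` with `2x² + 2w² + y² + z² > 0`:
`x + w − √(x² + y² + z² + w²) ≥ −(y² + z²) / √(2x² + 2w² + y² + z²)`. -/
theorem correction_term_lower_bound (x y z w : ℝ)
    (hx : 0 ≤ x) (hy : 0 ≤ y) (hz : 0 ≤ z) (hw : 0 ≤ w)
    (hpos : 0 < 2 * x ^ 2 + 2 * w ^ 2 + y ^ 2 + z ^ 2) :
    x + w - Real.sqrt (x ^ 2 + y ^ 2 + z ^ 2 + w ^ 2)
      ≥ -((y ^ 2 + z ^ 2) / Real.sqrt (2 * x ^ 2 + 2 * w ^ 2 + y ^ 2 + z ^ 2)) := by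
  set A := Real.sqrt (x ^ 2 + y ^ 2 + z ^ 2 + w ^ 2) with hAdef
  set B := Real.sqrt (2 * x ^ 2 + 2 * w ^ 2 + y ^ 2 + z ^ 2) with hBdef
  have hA0 : 0 ≤ A := Real.sqrt_nonneg _
  have hB0 : 0 < B := Real.sqrt_pos.mpr hpos
  have hA2 : A ^ 2 = x ^ 2 + y ^ 2 + z ^ 2 + w ^ 2 := by
    rw [hAdef]; exact Real.sq_sqrt (by positivity)
  have hB2 : B ^ 2 = 2 * x ^ 2 + 2 * w ^ 2 + y ^ 2 + z ^ 2 := by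
    rw [hBdef]; exact Real.sq_sqrt (le_of_lt hpos)
  have hBle : B ≤ A + x + w := by
    nlinarith [sq_nonneg (A - x - w), sq_nonneg (x - w), mul_nonneg hA0 (add_nonneg hx hw)]
  have key : (A - x - w) * B ≤ y ^ 2 + z ^ 2 := by
    rcases le_or_gt A (x + w) with h | h
    · nlinarith
    · have h1 : (A - x - w) * B ≤ (A - x - w) * (A + x + w) :=
        mul_le_mul_of_nonneg_left hBle (by linarith)
      nlinarith [mul_nonneg hx hw]
    
  rw [ge_iff_le, neg_le, neg_sub]
  rw [le_div_iff₀ hB0]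
  nlinarith [key]
end

section
/- For all real numbers σ_a, σ_b, σ_γ, p_a, p_b > 0: (√(σ_a² + p_a²σ_γ²) − √(σ_b² + p_b²σ_γ²))² ≥ (σ_a − σ_b)² + σ_γ²·(p_a − p_b)² − 2·((σ_a·p_b·σ_γ)² + (p_a·σ_b·σ_γ)²) / √(2(σ_a·σ_b)² + 2(p_a·p_b·σ_γ²)² + (σ_a·p_b·σ_γ)² + (p_a·σ_b·σ_γ)²). -/
set_option maxHeartbeats 800000


/-- For all positive reals `σ_a, σ_b, σ_γ, p_a, p_b`:
`(√(σ_a² + p_a²σ_γ²) − √(σ_b² + p_b²σ_γ²))² ≥ (σ_a − σ_b)² + σ_γ²·(p_a − p_b)²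
  − 2·((σ_a p_b σ_γ)² + (p_a σ_b σ_γ)²) / √(2(σ_a σ_b)² + 2(p_a p_b σ_γ²)² + (σ_a p_b σ_γ)² + (p_a σ_b σ_γ)²)`. -/
theorem variance_lower_bound (σa σb σγ pa pb : ℝ)
    (hσa : 0 < σa) (hσb : 0 < σb) (hσγ : 0 < σγ) (hpa : 0 < pa) (hpb : 0 < pb) :
    (Real.sqrt (σa ^ 2 + pa ^ 2 * σγ ^ 2) - Real.sqrt (σb ^ 2 + pb ^ 2 * σγ ^ 2)) ^ 2
      ≥ (σa - σb) ^ 2 + σγ ^ 2 * (pa - pb) ^ 2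
        - 2 * (((σa * pb * σγ) ^ 2 + (pa * σb * σγ) ^ 2)
            / Real.sqrt (2 * (σa * σb) ^ 2 + 2 * (pa * pb * σγ ^ 2) ^ 2
                + (σa * pb * σγ) ^ 2 + (pa * σb * σγ) ^ 2)) := by
  set A := σa ^ 2 + pa ^ 2 * σγ ^ 2 with hAdef
  set B := σb ^ 2 + pb ^ 2 * σγ ^ 2 with hBdef
  set D := (σa * pb * σγ) ^ 2 + (pa * σb * σγ) ^ 2 with hDdef
  set S := 2 * (σa * σb) ^ 2 + 2 * (pa * pb * σγ ^ 2) ^ 2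
      + (σa * pb * σγ) ^ 2 + (pa * σb * σγ) ^ 2 with hSdef
  set P := σa * σb + pa * pb * σγ ^ 2 with hPdef
  have hA : 0 < A := by positivity
  have hB : 0 < B := by positivity
  have hDpos : 0 < D := by positivity
  have hSpos : 0 < S := by positivity
  have hPpos : 0 < P := by positivity
  have hx : 0 < σa * σb := by positivity
  have hy : 0 < pa * pb * σγ ^ 2 := by positivity
  -- t = √(P² + D)
  set t := Real.sqrt (P ^ 2 + D) with htdef
  have ht0 : 0 ≤ t := Real.sqrt_nonneg _
  have ht2 : t ^ 2 = P ^ 2 + D := Real.sq_sqrt (by positivity)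
  -- √(AB) ≤ t
  have hABle : A * B ≤ P ^ 2 + D := by nlinarith [mul_pos hx hy]
  have hsqrtAB : Real.sqrt (A * B) ≤ t := by
    rw [htdef]; exact Real.sqrt_le_sqrt hABle
  -- √S ≤ P + t
  have hSle : S ≤ (P + t) ^ 2 := by nlinarith [mul_nonneg hPpos.le ht0, mul_pos hx hy]
  have hsqrtS : Real.sqrt S ≤ P + t := by
    calc Real.sqrt S ≤ Real.sqrt ((P + t) ^ 2) := Real.sqrt_le_sqrt hSle
    _ = P + t := Real.sqrt_sq (by positivity)
  have hsqrtSpos : 0 < Real.sqrt S := Real.sqrt_pos.mpr hSpos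
  -- t ≤ P + D / √S
  have hkey : t ≤ P + D / Real.sqrt S := by
    have h1 : D / (P + t) ≤ D / Real.sqrt S :=
      div_le_div_of_nonneg_left hDpos.le hsqrtSpos hsqrtS
    have h2 : t - P = D / (P + t) := by
      rw [eq_div_iff (by positivity)]
      linear_combination ht2
    linarith
  -- expand the square
  have hmul : Real.sqrt A * Real.sqrt B = Real.sqrt (A * B) :=
    (Real.sqrt_mul hA.le B).symm
  have hA2 : Real.sqrt A ^ 2 = A := Real.sq_sqrt hA.le
  have hB2 : Real.sqrt B ^ 2 = B := Real.sq_sqrt hB.le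
  have hfinal : Real.sqrt (A * B) ≤ P + D / Real.sqrt S := le_trans hsqrtAB hkey
  have hexp : (Real.sqrt A - Real.sqrt B) ^ 2
      = A + B - 2 * Real.sqrt (A * B) := by
    have : (Real.sqrt A - Real.sqrt B) ^ 2
        = Real.sqrt A ^ 2 + Real.sqrt B ^ 2 - 2 * (Real.sqrt A * Real.sqrt B) := by ring
    rw [this, hA2, hB2, hmul]
  rw [hexp]
  have hrhs : (σa - σb) ^ 2 + σγ ^ 2 * (pa - pb) ^ 2 - 2 * (D / Real.sqrt S)
      = A + B - 2 * P - 2 * (D / Real.sqrt S) := by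
    rw [hAdef, hBdef, hPdef]; ring
  rw [hrhs]
  linarith
end

section
/- Let m, n, k be natural numbers with m ≥ 1, n ≥ 1, k ≥ 1, regarded as real numbers. Define p_a = √(m/(m + k − 1)) and p_b = √(n/(n + k − 1)). Then (p_a − p_b)² ≤ |m − n| / k. In particular, the discrepancy term (p_a − p_b)² appearing in the Wasserstein-approximation error bound of the paper's Theorem 2 decreases at rate O(1/k) as the size k of the global shared measure increases. -/
/-!
For nonnegative `x, y` one has `(x - y)² ≤ |x - y| (x + y) = |x² - y²|`, so the squared distance
of two square roots is at most the distance of their arguments. It remains to compare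
`m / (m + k - 1)` with `n / (n + k - 1)`: their difference is
`(m - n)(k - 1) / ((m + k - 1)(n + k - 1))`, and both factors of the denominator are at least `k`
once `m, n ≥ 1`, which bounds it by `|m - n| (k - 1) / k²  ≤ |m - n| / k`.
-/

lemma sq_sub_le_abs_sq_sub_sq {x y : ℝ} (hx : 0 ≤ x) (hy : 0 ≤ y) :
    (x - y) ^ 2 ≤ |x ^ 2 - y ^ 2| := by
  have h_abs_le : |x - y| ≤ |x + y| := by
    rw [abs_of_nonneg (add_nonneg hx hy)]
    exact abs_sub_le_iff.2 ⟨by linarith, by linarith⟩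
  calc (x - y) ^ 2 = |x - y| * |x - y| := by rw [abs_mul_abs_self, sq]
    _ ≤ |x - y| * |x + y| := mul_le_mul_of_nonneg_left h_abs_le (abs_nonneg _)
    _ = |x ^ 2 - y ^ 2| := by rw [← abs_mul]; ring_nf

lemma Real.sq_sqrt_sub_sqrt_le_abs_sub (a b : ℝ) : (√a - √b) ^ 2 ≤ |a - b| :=
  calc (√a - √b) ^ 2 ≤ |√a ^ 2 - √b ^ 2| :=
        sq_sub_le_abs_sq_sub_sq (Real.sqrt_nonneg a) (Real.sqrt_nonneg b)
    _ = |max a 0 - max b 0| := by rw [Real.sq_sqrt', Real.sq_sqrt']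
    _ ≤ |a - b| := abs_max_sub_max_le_abs a b 0

lemma abs_div_add_sub_one_sub_div_add_sub_one_le {x y K : ℝ} (hx : 1 ≤ x) (hy : 1 ≤ y)
    (hK : 1 ≤ K) : |x / (x + K - 1) - y / (y + K - 1)| ≤ |x - y| / K := by
  have hxK : 0 < x + K - 1 := by linarith
  have hyK : 0 < y + K - 1 := by linarith
  have h_diff : x / (x + K - 1) - y / (y + K - 1)
      = (x - y) * (K - 1) / ((x + K - 1) * (y + K - 1)) := by
    field_simp
    ring
  have h_denom : (K - 1) * K ≤ (x + K - 1) * (y + K - 1) :=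
    mul_le_mul (by linarith) (by linarith) (by linarith) hxK.le
  rw [h_diff, abs_div, abs_mul, abs_of_nonneg (sub_nonneg.2 hK), abs_of_pos (mul_pos hxK hyK),
    div_le_div_iff₀ (mul_pos hxK hyK) (by linarith)]
  calc |x - y| * (K - 1) * K = |x - y| * ((K - 1) * K) := by ring
    _ ≤ |x - y| * ((x + K - 1) * (y + K - 1)) := mul_le_mul_of_nonneg_left h_denom (abs_nonneg _)

/-- For natural numbers `m, n, k ≥ 1`, with `p_a = √(m/(m+k−1))` and
`p_b = √(n/(n+k−1))`, we have `(p_a − p_b)² ≤ |m − n| / k`. -/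
theorem weight_discrepancy_rate (m n k : ℕ) (hm : 1 ≤ m) (hn : 1 ≤ n) (hk : 1 ≤ k) :
    (Real.sqrt ((m : ℝ) / ((m : ℝ) + (k : ℝ) - 1))
      - Real.sqrt ((n : ℝ) / ((n : ℝ) + (k : ℝ) - 1))) ^ 2
      ≤ |(m : ℝ) - (n : ℝ)| / (k : ℝ) :=
  (Real.sq_sqrt_sub_sqrt_le_abs_sub _ _).trans <|
    abs_div_add_sub_one_sub_div_add_sub_one_le (by exact_mod_cast hm) (by exact_mod_cast hn)
      (by exact_mod_cast hk)
end

section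
/- For m ∈ ℝ and v ≥ 0, let N(m, v) denote the Gaussian probability measure on ℝ with mean m and variance v (the Dirac mass at m if v = 0). Define W₂²(μ, ν) as the infimum over all couplings π of μ and ν of ∫_{ℝ×ℝ} (x − y)² dπ(x, y). Then for all m_a, m_b, m_γ ∈ ℝ, all σ_a, σ_b, σ_γ ≥ 0, and all p_a, p_b ∈ [0, 1]: W₂²(N(m_a + m_γ, σ_a² + p_a²σ_γ²), N(m_b + m_γ, σ_b² + p_b²σ_γ²)) ≤ W₂²(N(m_a, σ_a²), N(m_b, σ_b²)) + σ_γ²·(p_a − p_b)². -/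
open MeasureTheory ProbabilityTheory

/-- The squared 2-Wasserstein distance between probability measures on `ℝ`: the infimum over all
couplings `π` of `μ` and `ν` of `∫ (x − y)² dπ(x, y)`. -/
noncomputable def W2sq (μ ν : Measure ℝ) : ℝ :=
  sInf {r : ℝ | ∃ π : Measure (ℝ × ℝ), IsProbabilityMeasure π ∧
    π.map Prod.fst = μ ∧ π.map Prod.snd = ν ∧ r = ∫ p : ℝ × ℝ, (p.1 - p.2) ^ 2 ∂π}

open scoped NNReal

/-! Let `(X, Y)` be any coupling of `N(m_a, σ_a²)` and `N(m_b, σ_b²)` and `Z` a standard Gaussian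
independent of it. Since sums of independent Gaussians are Gaussian,
`(X + m_γ + p_a σ_γ Z, Y + m_γ + p_b σ_γ Z)` couples the two interpolated Gaussians, and since `Z`
is centred and independent of `X − Y`, its cost is `E (X − Y)² + σ_γ² (p_a − p_b)²`.
Taking the infimum over `(X, Y)` gives the bound. -/

lemma integral_prod_add_sq_of_integral_eq_zero {α β : Type*} [MeasurableSpace α] [MeasurableSpace β]
    {μ : Measure α} {ν : Measure β} [IsProbabilityMeasure μ] [IsProbabilityMeasure ν]
    {f : α → ℝ} {g : β → ℝ} (hf : MemLp f 2 μ) (hg : MemLp g 2 ν) (hg0 : ∫ y, g y ∂ν = 0) :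
    ∫ z, (f z.1 + g z.2) ^ 2 ∂μ.prod ν = ∫ x, f x ^ 2 ∂μ + ∫ y, g y ^ 2 ∂ν := by
  have hf2 : Integrable (fun z : α × β ↦ f z.1 ^ 2) (μ.prod ν) := hf.integrable_sq.comp_fst ν
  have hfg : Integrable (fun z : α × β ↦ 2 * (f z.1 * g z.2)) (μ.prod ν) :=
    ((hf.integrable one_le_two).mul_prod (hg.integrable one_le_two)).const_mul 2
  have hg2 : Integrable (fun z : α × β ↦ g z.2 ^ 2) (μ.prod ν) := hg.integrable_sq.comp_snd μ
  calc ∫ z, (f z.1 + g z.2) ^ 2 ∂μ.prod ν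
      = ∫ z, (f z.1 ^ 2 + 2 * (f z.1 * g z.2) + g z.2 ^ 2) ∂μ.prod ν := by
        congr 1; ext z; ring
    _ = ∫ x, f x ^ 2 ∂μ + ∫ y, g y ^ 2 ∂ν := by
        rw [integral_add (hf2.fun_add hfg) hg2, integral_add hf2 hfg, integral_const_mul,
          integral_prod_mul, integral_fun_fst (fun x ↦ f x ^ 2),
          integral_fun_snd (fun y ↦ g y ^ 2), hg0]
        simp

lemma W2sq_le_integral (π : Measure (ℝ × ℝ)) [IsProbabilityMeasure π] :
    W2sq (π.map Prod.fst) (π.map Prod.snd) ≤ ∫ p, (p.1 - p.2) ^ 2 ∂π :=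
  csInf_le ⟨0, by rintro r ⟨π', -, -, -, rfl⟩; exact integral_nonneg fun p ↦ sq_nonneg _⟩
    ⟨π, inferInstance, rfl, rfl, rfl⟩

lemma le_W2sq {μ ν : Measure ℝ} [IsProbabilityMeasure μ] [IsProbabilityMeasure ν] {c : ℝ}
    (h : ∀ π : Measure (ℝ × ℝ), IsProbabilityMeasure π → π.map Prod.fst = μ →
      π.map Prod.snd = ν → c ≤ ∫ p, (p.1 - p.2) ^ 2 ∂π) :
    c ≤ W2sq μ ν := by
  refine le_csInf ⟨_, μ.prod ν, inferInstance, by simp, by simp, rfl⟩ ?_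
  rintro r ⟨π, hπ, h₁, h₂, rfl⟩
  exact h π hπ h₁ h₂

lemma memLp_fst_sub_snd {μ ν : Measure ℝ} (hμ : MemLp id 2 μ) (hν : MemLp id 2 ν)
    {π : Measure (ℝ × ℝ)} (h₁ : π.map Prod.fst = μ) (h₂ : π.map Prod.snd = ν) :
    MemLp (fun p : ℝ × ℝ ↦ p.1 - p.2) 2 π :=
  ((h₁ ▸ hμ).comp_of_map measurable_fst.aemeasurable).sub
    ((h₂ ▸ hν).comp_of_map measurable_snd.aemeasurable)

theorem W2sq_conv_le {μ ν : Measure ℝ} [IsProbabilityMeasure μ] [IsProbabilityMeasure ν]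
    (hμ : MemLp id 2 μ) (hν : MemLp id 2 ν) (ρ : Measure (ℝ × ℝ)) [IsProbabilityMeasure ρ]
    (hρ : MemLp id 2 (ρ.map fun q ↦ q.1 - q.2)) (hρ0 : ∫ x, x ∂ρ.map (fun q ↦ q.1 - q.2) = 0) :
    W2sq (μ ∗ ρ.map Prod.fst) (ν ∗ ρ.map Prod.snd)
      ≤ W2sq μ ν + ∫ x, x ^ 2 ∂ρ.map (fun q ↦ q.1 - q.2) := by
  rw [integral_map (by fun_prop) (by fun_prop)] at hρ0 ⊢
  replace hρ : MemLp (fun q : ℝ × ℝ ↦ q.1 - q.2) 2 ρ := hρ.comp_of_map (by fun_prop)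
  rw [← sub_le_iff_le_add]
  refine le_W2sq fun π hπ h₁ h₂ ↦ ?_
  -- `π ∗ ρ` is the law of `(X + U, Y + V)` for independent `(X, Y) ∼ π` and `(U, V) ∼ ρ`.
  have hcost : ∫ p, (p.1 - p.2) ^ 2 ∂(π ∗ ρ)
      = ∫ p, (p.1 - p.2) ^ 2 ∂π + ∫ q, (q.1 - q.2) ^ 2 ∂ρ := by
    rw [Measure.conv, integral_map (by fun_prop) (by fun_prop),
      ← integral_prod_add_sq_of_integral_eq_zero (memLp_fst_sub_snd hμ hν h₁ h₂) hρ hρ0]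
    congr 1; ext z; simp only [Prod.fst_add, Prod.snd_add]; ring
  have hfst : (π ∗ ρ).map Prod.fst = μ ∗ ρ.map Prod.fst := by
    rw [← h₁]; exact Measure.map_conv_addMonoidHom (AddMonoidHom.fst ℝ ℝ) measurable_fst
  have hsnd : (π ∗ ρ).map Prod.snd = ν ∗ ρ.map Prod.snd := by
    rw [← h₂]; exact Measure.map_conv_addMonoidHom (AddMonoidHom.snd ℝ ℝ) measurable_snd
  have := W2sq_le_integral (π ∗ ρ)
  rw [hfst, hsnd, hcost] at this
  linarith

lemma gaussianReal_map_const_add_mul (m a : ℝ) :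
    (gaussianReal 0 1).map (fun z ↦ m + a * z) = gaussianReal m (a ^ 2).toNNReal := by
  have : (fun z ↦ m + a * z) = (m + ·) ∘ (a * ·) := rfl
  rw [this, ← Measure.map_map (by fun_prop) (by fun_prop), gaussianReal_map_const_mul,
    gaussianReal_map_const_add]
  congr 1
  · ring
  · ext; simp [sq_nonneg]

lemma integral_sq_gaussianReal_zero (v : ℝ≥0) : ∫ x, x ^ 2 ∂gaussianReal 0 v = v := by
  rw [← variance_of_integral_eq_zero measurable_id'.aemeasurable integral_id_gaussianReal]
  simp

noncomputable def gaussianCommonNoise (m a b : ℝ) : Measure (ℝ × ℝ) :=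
  (gaussianReal 0 1).map fun z ↦ (m + a * z, m + b * z)

namespace gaussianCommonNoise

variable (m a b : ℝ)

instance : IsProbabilityMeasure (gaussianCommonNoise m a b) :=
  Measure.isProbabilityMeasure_map (by fun_prop)

lemma map_fst : (gaussianCommonNoise m a b).map Prod.fst = gaussianReal m (a ^ 2).toNNReal := by
  rw [gaussianCommonNoise, Measure.map_map (by fun_prop) (by fun_prop)]
  exact gaussianReal_map_const_add_mul m a

lemma map_snd : (gaussianCommonNoise m a b).map Prod.snd = gaussianReal m (b ^ 2).toNNReal := by
  rw [gaussianCommonNoise, Measure.map_map (by fun_prop) (by fun_prop)]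
  exact gaussianReal_map_const_add_mul m b

lemma map_sub : (gaussianCommonNoise m a b).map (fun q ↦ q.1 - q.2)
    = gaussianReal 0 ((a - b) ^ 2).toNNReal := by
  rw [gaussianCommonNoise, Measure.map_map (by fun_prop) (by fun_prop),
    ← gaussianReal_map_const_add_mul]
  congr 1; ext z; simp only [Function.comp_apply]; ring

end gaussianCommonNoise

lemma toNNReal_sq_add_toNNReal_mul_sq (s p σ : ℝ) :
    (s ^ 2).toNNReal + ((p * σ) ^ 2).toNNReal = (s ^ 2 + p ^ 2 * σ ^ 2).toNNReal := by
  rw [← Real.toNNReal_add (sq_nonneg _) (sq_nonneg _), mul_pow]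

theorem gaussian_interpolation_upper_bound_general
    (ma mb mγ : ℝ) (σa σb σγ : ℝ)
    (pa pb : ℝ) :
    W2sq (gaussianReal (ma + mγ) ((σa ^ 2 + pa ^ 2 * σγ ^ 2).toNNReal))
        (gaussianReal (mb + mγ) ((σb ^ 2 + pb ^ 2 * σγ ^ 2).toNNReal))
      ≤ W2sq (gaussianReal ma ((σa ^ 2).toNNReal)) (gaussianReal mb ((σb ^ 2).toNNReal))
        + σγ ^ 2 * (pa - pb) ^ 2 := by
  have key := W2sq_conv_le (μ := gaussianReal ma (σa ^ 2).toNNReal)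
    (ν := gaussianReal mb (σb ^ 2).toNNReal) (memLp_id_gaussianReal 2) (memLp_id_gaussianReal 2)
    (gaussianCommonNoise mγ (pa * σγ) (pb * σγ))
    (by rw [gaussianCommonNoise.map_sub]; exact memLp_id_gaussianReal 2)
    (by rw [gaussianCommonNoise.map_sub, integral_id_gaussianReal])
  rwa [gaussianCommonNoise.map_fst, gaussianCommonNoise.map_snd, gaussianCommonNoise.map_sub,
    gaussianReal_conv_gaussianReal, gaussianReal_conv_gaussianReal,
    toNNReal_sq_add_toNNReal_mul_sq, toNNReal_sq_add_toNNReal_mul_sq,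
    integral_sq_gaussianReal_zero, Real.coe_toNNReal _ (sq_nonneg _), ← sub_mul, mul_pow,
    mul_comm ((pa - pb) ^ 2)] at key

/-- For all means `m_a, m_b, m_γ ∈ ℝ`, standard deviations `σ_a, σ_b, σ_γ ≥ 0`
and weights `p_a, p_b ∈ [0, 1]`:
`W₂²(N(m_a + m_γ, σ_a² + p_a²σ_γ²), N(m_b + m_γ, σ_b² + p_b²σ_γ²))
  ≤ W₂²(N(m_a, σ_a²), N(m_b, σ_b²)) + σ_γ²·(p_a − p_b)²`. -/
theorem gaussian_interpolation_upper_bound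
    (ma mb mγ : ℝ) (σa σb σγ : ℝ) (hσa : 0 ≤ σa) (hσb : 0 ≤ σb) (hσγ : 0 ≤ σγ)
    (pa pb : ℝ) (hpa : pa ∈ Set.Icc (0 : ℝ) 1) (hpb : pb ∈ Set.Icc (0 : ℝ) 1) :
    W2sq (gaussianReal (ma + mγ) ((σa ^ 2 + pa ^ 2 * σγ ^ 2).toNNReal))
        (gaussianReal (mb + mγ) ((σb ^ 2 + pb ^ 2 * σγ ^ 2).toNNReal))
      ≤ W2sq (gaussianReal ma ((σa ^ 2).toNNReal)) (gaussianReal mb ((σb ^ 2).toNNReal))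
        + σγ ^ 2 * (pa - pb) ^ 2 :=
  gaussian_interpolation_upper_bound_general ma mb mγ σa σb σγ pa pb
end
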